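/- arXiv:1910.12529 — 3 statements merged into one kernel-verified Lean document; each statement's English description precedes it below -/
import Mathlib

section
/- The integral over the real line ∫_ℝ (i − 3x)/((x − i)⁴(x + i)³) dx equals −π/2. -/
/-!
The residue theorem is replaced by its elementary shadow. In the partial-fraction decomposition
of the integrand `f`, the two simple-pole terms `A / (z - i) - A / (z + i)` combine into
`2iA / (1 + z²)`, where `A = i/4` is the residue at `i`; all other terms have rational
antiderivatives. Hence `f = G' - (1/2) (1 + z²)⁻¹` with `G = rationalPart` vanishing at
infinity, and the integral is `-(1/2) π = 2πi A`.
-/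

open Complex Filter Topology MeasureTheory Bornology

theorem integral_eq_of_hasDerivAt_add_mul_inv_one_add_sq {f G : ℝ → ℂ} {a b : ℂ} (c : ℂ)
    (hG : ∀ x, HasDerivAt G (f x + c * ((1 + x ^ 2)⁻¹ : ℝ)) x) (hf : Integrable f)
    (hbot : Tendsto G atBot (𝓝 a)) (htop : Tendsto G atTop (𝓝 b)) :
    ∫ x, f x = b - a - c * Real.pi := by
  have hcauchy : Integrable fun x : ℝ => c * ((1 + x ^ 2)⁻¹ : ℝ) :=
    integrable_inv_one_add_sq.ofReal.const_mul c
  have hcauchy_int : ∫ x : ℝ, c * ((1 + x ^ 2)⁻¹ : ℝ) = c * Real.pi := by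
    rw [integral_const_mul, integral_complex_ofReal, integral_univ_inv_one_add_sq]
  have hFTC := integral_of_hasDerivAt_of_tendsto hG (hf.add hcauchy) hbot htop
  rw [integral_add hf hcauchy, hcauchy_int] at hFTC
  exact eq_sub_of_add_eq hFTC

namespace Complex

lemma ofReal_sub_I_ne_zero (x : ℝ) : (x : ℂ) - I ≠ 0 :=
  fun h => by simpa using congrArg im h

lemma ofReal_add_I_ne_zero (x : ℝ) : (x : ℂ) + I ≠ 0 :=
  fun h => by simpa using congrArg im h

lemma sq_norm_ofReal_sub_I (x : ℝ) : ‖(x : ℂ) - I‖ ^ 2 = 1 + x ^ 2 := by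
  rw [sub_eq_add_neg, ← neg_one_mul, ← ofReal_one, ← ofReal_neg, norm_add_mul_I,
    Real.sq_sqrt (by positivity)]
  ring

lemma norm_ofReal_add_I (x : ℝ) : ‖(x : ℂ) + I‖ = ‖(x : ℂ) - I‖ := by
  rw [← norm_conj]
  simp [sub_eq_add_neg]

end Complex

namespace KKWNovikov

noncomputable def integrand (z : ℂ) : ℂ := (I - 3 * z) / ((z - I) ^ 4 * (z + I) ^ 3)

noncomputable def rationalPart (z : ℂ) : ℂ :=
  (2 + 5 * I * z - 5 * z ^ 2 + 3 * I * z ^ 3 - 3 * z ^ 4) / (6 * ((z - I) ^ 3 * (z + I) ^ 2))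

lemma hasDerivAt_rationalPart {z : ℂ} (hm : z - I ≠ 0) (hp : z + I ≠ 0) :
    HasDerivAt rationalPart (integrand z + (1 + z ^ 2)⁻¹ / 2) z := by
  have hnum : HasDerivAt (fun w : ℂ => 2 + 5 * I * w - 5 * w ^ 2 + 3 * I * w ^ 3 - 3 * w ^ 4)
      (5 * I - 5 * (2 * z) + 3 * I * (3 * z ^ 2) - 3 * (4 * z ^ 3)) z :=
    ((((((hasDerivAt_id' z).const_mul (5 * I)).const_add 2).sub
      ((hasDerivAt_pow 2 z).const_mul 5)).add ((hasDerivAt_pow 3 z).const_mul (3 * I))).sub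
      ((hasDerivAt_pow 4 z).const_mul 3)).congr_deriv (by push_cast; ring)
  have hden : HasDerivAt (fun w : ℂ => 6 * ((w - I) ^ 3 * (w + I) ^ 2))
      (6 * (3 * (z - I) ^ 2 * (z + I) ^ 2 + 2 * (z - I) ^ 3 * (z + I))) z :=
    ((((hasDerivAt_id' z).sub_const I).pow 3).mul
      (((hasDerivAt_id' z).add_const I).pow 2)).const_mul 6 |>.congr_deriv (by norm_num; ring)
  have hsq : 1 + z ^ 2 = (z - I) * (z + I) := by linear_combination I_sq
  refine (hnum.div hden (by simp [hm, hp])).congr_deriv ?_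
  simp only [integrand, hsq]
  field_simp
  grind [I_sq]

lemma tendsto_rationalPart_cobounded : Tendsto rationalPart (cobounded ℂ) (𝓝 0) := by
  set φ : ℂ → ℂ := fun w => (2 * w ^ 5 + 5 * I * w ^ 4 - 5 * w ^ 3 + 3 * I * w ^ 2 - 3 * w) /
      (6 * ((1 - I * w) ^ 3 * (1 + I * w) ^ 2))
  have hφ : ContinuousAt φ 0 := by
    apply ContinuousAt.div <;> first | fun_prop | norm_num
  have hφ0 : φ 0 = 0 := by simp [φ]
  refine (hφ0 ▸ hφ.tendsto.comp tendsto_inv₀_cobounded).congr' ?_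
  filter_upwards [eventually_ne_cobounded 0] with z hz
  simp only [Function.comp_apply, φ, rationalPart]
  field_simp

lemma norm_integrand_le (x : ℝ) : ‖integrand x‖ ≤ 3 * (1 + x ^ 2)⁻¹ := by
  have hnum : ‖I - 3 * (x : ℂ)‖ ≤ 3 * ‖(x : ℂ) - I‖ := by
    rw [← sq_le_sq₀ (norm_nonneg _) (by positivity), mul_pow, sq_norm_ofReal_sub_I,
      Complex.sq_norm, normSq_apply]
    simp only [sub_re, I_re, mul_re, re_ofNat, ofReal_re, im_ofNat, ofReal_im, mul_zero, sub_zero,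
      zero_sub, mul_neg, neg_mul, neg_neg, sub_im, I_im, mul_im, zero_mul, add_zero, mul_one]
    nlinarith
  have hn : 1 ≤ ‖(x : ℂ) - I‖ := by
    rw [← one_le_sq_iff₀ (norm_nonneg _), sq_norm_ofReal_sub_I]
    nlinarith
  rw [integrand, norm_div, norm_mul, norm_pow, norm_pow, norm_ofReal_add_I,
    ← sq_norm_ofReal_sub_I, div_le_iff₀ (by positivity)]
  calc _ ≤ 3 * ‖(x : ℂ) - I‖ := hnum
    _ ≤ 3 * ‖(x : ℂ) - I‖ ^ 5 := by gcongr; exact le_self_pow₀ hn (by norm_num)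
    _ = _ := by field_simp

lemma integrable_integrand : Integrable fun x : ℝ => integrand x := by
  refine (integrable_inv_one_add_sq.const_mul 3).mono' ?_ (.of_forall norm_integrand_le)
  refine (Continuous.div (by fun_prop) (by fun_prop) fun x => ?_).aestronglyMeasurable
  exact mul_ne_zero (pow_ne_zero _ (ofReal_sub_I_ne_zero x))
    (pow_ne_zero _ (ofReal_add_I_ne_zero x))

end KKWNovikov

open KKWNovikov in
theorem stmt_6 :
    ∫ x : ℝ, (I - 3 * (x : ℂ)) / (((x : ℂ) - I) ^ 4 * ((x : ℂ) + I) ^ 3) = -((Real.pi : ℂ) / 2) := by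
  have hderiv (x : ℝ) : HasDerivAt (fun t : ℝ => rationalPart t)
      (integrand x + (1 / 2 : ℂ) * ((1 + x ^ 2)⁻¹ : ℝ)) x := by
    convert (hasDerivAt_rationalPart (ofReal_sub_I_ne_zero x) (ofReal_add_I_ne_zero x)).comp_ofReal
      using 1
    push_cast
    ring
  have := integral_eq_of_hasDerivAt_add_mul_inv_one_add_sq _ hderiv integrable_integrand
    (tendsto_rationalPart_cobounded.comp (RCLike.tendsto_ofReal_atBot_cobounded ℂ))
    (tendsto_rationalPart_cobounded.comp (RCLike.tendsto_ofReal_atTop_cobounded ℂ))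
  simpa [integrand, div_eq_inv_mul] using this
end

section
/- The integral over the real line ∫_ℝ ((3/4)i + 2 + (3 + 4i)x + (−6 + 2i)x² + 3x³ + (9/4)ix⁴)/((x − i)⁵(x + i)⁴) dx equals −19π/128 + (15/32)πi. -/
/-!
Partial fractions write the integrand as `c / (1 + x²)` plus multiples of `(x - w)⁻ⁿ` with
`w = ±i` and `n ≥ 2`. Such a power has the antiderivative `-(x - w)^(1-n) / (n - 1)`, which
vanishes at `±∞` because `w` is off the real line, so it integrates to `0`, and only `c · π`
survives. (Here `c / (2i)` is the residue of the integrand at `i`.)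
-/

open Complex Real

open MeasureTheory Filter Topology Bornology

lemma abs_im_le_norm_ofReal_sub (w : ℂ) (x : ℝ) : |w.im| ≤ ‖(x : ℂ) - w‖ := by
  simpa using abs_im_le_norm ((x : ℂ) - w)

lemma ofReal_sub_ne_zero_of_im_ne_zero {w : ℂ} (hw : w.im ≠ 0) (x : ℝ) : (x : ℂ) - w ≠ 0 :=
  norm_pos_iff.mp <| (abs_pos.mpr hw).trans_le (abs_im_le_norm_ofReal_sub w x)

lemma tendsto_inv_ofReal_sub_pow_cobounded (w : ℂ) {m : ℕ} (hm : m ≠ 0) :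
    Tendsto (fun x : ℝ => (((x : ℂ) - w) ^ m)⁻¹) (cobounded ℝ) (𝓝 0) :=
  tendsto_inv₀_cobounded.comp <| (tendsto_pow_cobounded_cobounded hm).comp <|
    (tendsto_sub_const_cobounded w).comp (RCLike.tendsto_ofReal_cobounded_cobounded ℂ)

lemma one_add_sq_le_mul_norm_ofReal_sub_sq {w : ℂ} (hw : w.im ≠ 0) :
    ∃ C, ∀ x : ℝ, 1 + x ^ 2 ≤ C * ‖(x : ℂ) - w‖ ^ 2 := by
  set K := (1 + 2 * w.re ^ 2) / w.im ^ 2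
  refine ⟨2 + K, fun x => ?_⟩
  have hK : K * w.im ^ 2 = 1 + 2 * w.re ^ 2 := div_mul_cancel₀ _ (by positivity)
  have hnorm : ‖(x : ℂ) - w‖ ^ 2 = (x - w.re) ^ 2 + w.im ^ 2 := by
    simp only [Complex.sq_norm, normSq_apply, sub_re, ofReal_re, sub_im, ofReal_im]
    ring
  rw [hnorm]
  -- `x² ≤ 2 (x - re w)² + 2 (re w)²`
  nlinarith [sq_nonneg (x - 2 * w.re), mul_nonneg (by positivity : 0 ≤ K) (sq_nonneg (x - w.re))]

lemma integrable_inv_ofReal_sub_pow {w : ℂ} (hw : w.im ≠ 0) {n : ℕ} (hn : 2 ≤ n) :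
    Integrable fun x : ℝ => (((x : ℂ) - w) ^ n)⁻¹ := by
  obtain ⟨m, rfl⟩ := Nat.exists_eq_add_of_le hn
  obtain ⟨C, hC⟩ := one_add_sq_le_mul_norm_ofReal_sub_sq hw
  have hcont (k : ℕ) : Continuous fun x : ℝ => (((x : ℂ) - w) ^ k)⁻¹ :=
    ((continuous_ofReal.sub continuous_const).pow k).inv₀
      fun x => pow_ne_zero k (ofReal_sub_ne_zero_of_im_ne_zero hw x)
  have hsq : Integrable fun x : ℝ => (((x : ℂ) - w) ^ 2)⁻¹ := by
    refine (integrable_inv_one_add_sq.const_mul C).mono' (hcont 2).aestronglyMeasurable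
      (Eventually.of_forall fun x => ?_)
    have hpos : 0 < ‖(x : ℂ) - w‖ ^ 2 := by
      have := ofReal_sub_ne_zero_of_im_ne_zero hw x
      positivity
    rw [norm_inv, norm_pow, ← div_eq_mul_inv, le_div_iff₀ (by positivity), inv_mul_le_iff₀ hpos,
      mul_comm]
    exact hC x
  have hbdd (x : ℝ) : ‖(((x : ℂ) - w) ^ m)⁻¹‖ ≤ (|w.im| ^ m)⁻¹ := by
    rw [norm_inv, norm_pow]
    exact inv_anti₀ (by positivity)
      (pow_le_pow_left₀ (abs_nonneg _) (abs_im_le_norm_ofReal_sub w x) m)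
  simpa [← mul_inv, ← pow_add] using
    hsq.mul_bdd (hcont m).aestronglyMeasurable (Eventually.of_forall hbdd)

lemma hasDerivAt_inv_ofReal_sub_pow {w : ℂ} (hw : w.im ≠ 0) (m : ℕ) (x : ℝ) :
    HasDerivAt (fun y : ℝ => -((m : ℂ) + 1)⁻¹ * (((y : ℂ) - w) ^ (m + 1))⁻¹)
      (((x : ℂ) - w) ^ (m + 2))⁻¹ x := by
  have hx := ofReal_sub_ne_zero_of_im_ne_zero hw x
  have h := (((((hasDerivAt_id' (x : ℂ)).sub_const w).fun_pow (m + 1)).fun_inv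
    (pow_ne_zero _ hx)).const_mul (-((m : ℂ) + 1)⁻¹)).comp_ofReal
  convert h using 1
  push_cast
  field_simp
  ring

lemma integral_inv_ofReal_sub_pow {w : ℂ} (hw : w.im ≠ 0) {n : ℕ} (hn : 2 ≤ n) :
    ∫ x : ℝ, (((x : ℂ) - w) ^ n)⁻¹ = 0 := by
  obtain ⟨m, rfl⟩ := Nat.exists_eq_add_of_le' hn
  have hlim : Tendsto (fun y : ℝ => -((m : ℂ) + 1)⁻¹ * (((y : ℂ) - w) ^ (m + 1))⁻¹)
      (cobounded ℝ) (𝓝 0) := by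
    simpa using
      (tendsto_inv_ofReal_sub_pow_cobounded w m.succ_ne_zero).const_mul (-((m : ℂ) + 1)⁻¹)
  simpa using integral_of_hasDerivAt_of_tendsto (hasDerivAt_inv_ofReal_sub_pow hw m)
    (integrable_inv_ofReal_sub_pow hw hn)
    (hlim.mono_left IsOrderBornology.atBot_le_cobounded)
    (hlim.mono_left IsOrderBornology.atTop_le_cobounded)

lemma integrable_sum_mul_inv_ofReal_sub_pow {w : ℂ} (hw : w.im ≠ 0) {k : ℕ} (a : Fin k → ℂ) :
    Integrable fun x : ℝ => ∑ j : Fin k, a j * (((x : ℂ) - w) ^ (j + 2 : ℕ))⁻¹ :=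
  integrable_finsetSum _ fun (j : Fin k) _ =>
    (integrable_inv_ofReal_sub_pow hw (Nat.le_add_left 2 j)).const_mul (a j)

lemma integral_sum_mul_inv_ofReal_sub_pow {w : ℂ} (hw : w.im ≠ 0) {k : ℕ} (a : Fin k → ℂ) :
    ∫ x : ℝ, ∑ j : Fin k, a j * (((x : ℂ) - w) ^ (j + 2 : ℕ))⁻¹ = 0 := by
  rw [integral_finsetSum _ fun (j : Fin k) _ =>
    (integrable_inv_ofReal_sub_pow hw (Nat.le_add_left 2 j)).const_mul (a j)]
  exact Finset.sum_eq_zero fun j _ => by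
    rw [integral_const_mul, integral_inv_ofReal_sub_pow hw (Nat.le_add_left 2 j), mul_zero]

lemma integrand_eq_partial_fractions (x : ℝ) :
    ((3 / 4) * I + 2 + (3 + 4 * I) * (x : ℂ) + (-6 + 2 * I) * (x : ℂ) ^ 2 + 3 * (x : ℂ) ^ 3
        + (9 / 4) * I * (x : ℂ) ^ 4) / (((x : ℂ) - I) ^ 5 * ((x : ℂ) + I) ^ 4)
      = (-19 / 128 + 15 / 32 * I) * (((1 + x ^ 2)⁻¹ : ℝ) : ℂ)
        + ∑ j : Fin 4, ![1 / 4 - I / 8, -7 / 16 * I, -3 / 16, 1 / 4 + I / 16] j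
            * (((x : ℂ) - I) ^ (j + 2 : ℕ))⁻¹
        + ∑ j : Fin 3, ![-13 / 128 - 11 / 32 * I, 7 / 16 - 17 / 64 * I, -1 / 32 + 3 / 8 * I] j
            * (((x : ℂ) - -I) ^ (j + 2 : ℕ))⁻¹ := by
  have h₁ : (x : ℂ) - I ≠ 0 := ofReal_sub_ne_zero_of_im_ne_zero (by simp) x
  have h₂ : (x : ℂ) + I ≠ 0 := by
    simpa using ofReal_sub_ne_zero_of_im_ne_zero (w := -I) (by simp) x
  have hsq : ((1 + x ^ 2 : ℝ) : ℂ) = ((x : ℂ) - I) * ((x : ℂ) + I) := by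
    push_cast
    linear_combination I_sq
  simp only [Fin.sum_univ_succ, Fin.sum_univ_zero, Fin.val_zero, Fin.val_succ,
    Matrix.cons_val_zero, Matrix.cons_val_succ, ofReal_inv, hsq, sub_neg_eq_add]
  field_simp
  have hI : I ^ 2 = -1 := I_sq
  grind

theorem stmt_15 :
    ∫ x : ℝ, ((3 / 4) * I + 2 + (3 + 4 * I) * (x : ℂ) + (-6 + 2 * I) * (x : ℂ) ^ 2 + 3 * (x : ℂ) ^ 3 + (9 / 4) * I * (x : ℂ) ^ 4) / (((x : ℂ) - I) ^ 5 * ((x : ℂ) + I) ^ 4) = -(19 * (Real.pi : ℂ)) / 128 + (15 / 32) * Real.pi * I := by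
  have hI : I.im ≠ 0 := by simp
  have hnegI : (-I).im ≠ 0 := by simp
  have h₀ : Integrable fun x : ℝ => (-19 / 128 + 15 / 32 * I) * (((1 + x ^ 2)⁻¹ : ℝ) : ℂ) :=
    integrable_inv_one_add_sq.ofReal.const_mul _
  simp_rw [integrand_eq_partial_fractions]
  rw [integral_add (h₀.fun_add (integrable_sum_mul_inv_ofReal_sub_pow hI _))
      (integrable_sum_mul_inv_ofReal_sub_pow hnegI _),
    integral_add h₀ (integrable_sum_mul_inv_ofReal_sub_pow hI _),
    integral_const_mul, integral_complex_ofReal, integral_univ_inv_one_add_sq,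
    integral_sum_mul_inv_ofReal_sub_pow hI, integral_sum_mul_inv_ofReal_sub_pow hnegI]
  ring
end

section
/- The integral over the real line ∫_ℝ (−7i + 26x + 15ix²)/((x − i)⁵(x + i)³) dx equals 55πi/16. -/
/-!
Decompose the integrand into partial fractions. Every term `(x - c)⁻ⁿ` with `n ≥ 2` and `c ∉ ℝ`
has the antiderivative `-((n - 1) (x - c)ⁿ⁻¹)⁻¹`, which vanishes at `±∞`, so it integrates to
zero. The simple-pole terms at `±i` have opposite residues (the integrand decays faster than
`1/x`), so they combine to `(55i/16) / (1 + x²)`, whose integral is `55πi/16`.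
-/

open Complex Real MeasureTheory Filter Topology Bornology

lemma integrable_inv_sub_sq_add_sq (a : ℝ) {b : ℝ} (hb : b ≠ 0) :
    Integrable fun x : ℝ => ((x - a) ^ 2 + b ^ 2)⁻¹ := by
  refine (((integrable_inv_one_add_sq.comp_div hb).comp_sub_right a).const_mul (b ^ 2)⁻¹).congr
    (ae_of_all _ fun x => ?_)
  field_simp
  ring

namespace Complex

lemma ofReal_sub_ne_zero {c : ℂ} (hc : c.im ≠ 0) (x : ℝ) : (x : ℂ) - c ≠ 0 := by
  intro h
  apply hc
  simpa using congrArg im h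

lemma norm_ofReal_sub_sq (c : ℂ) (x : ℝ) : ‖(x : ℂ) - c‖ ^ 2 = (x - c.re) ^ 2 + c.im ^ 2 := by
  rw [Complex.sq_norm, normSq_apply]
  simp only [sub_re, ofReal_re, sub_im, ofReal_im, zero_sub]
  ring

lemma integrable_inv_ofReal_sub_pow {c : ℂ} (hc : c.im ≠ 0) {n : ℕ} (hn : 2 ≤ n) :
    Integrable fun x : ℝ => (((x : ℂ) - c) ^ n)⁻¹ := by
  have hcont : Continuous fun x : ℝ => (((x : ℂ) - c) ^ n)⁻¹ :=
    ((continuous_ofReal.sub continuous_const).pow n).inv₀ fun x =>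
      pow_ne_zero n (ofReal_sub_ne_zero hc x)
  refine ((integrable_inv_sub_sq_add_sq c.re hc).const_mul (|c.im| ^ (n - 2))⁻¹).mono'
    hcont.aestronglyMeasurable (ae_of_all _ fun x => ?_)
  have hpos : 0 < |c.im| ^ (n - 2) := pow_pos (abs_pos.mpr hc) _
  have him_le : |c.im| ≤ ‖(x : ℂ) - c‖ := by simpa using abs_im_le_norm ((x : ℂ) - c)
  have hsplit : ‖(x : ℂ) - c‖ ^ n = ‖(x : ℂ) - c‖ ^ (n - 2) * ‖(x : ℂ) - c‖ ^ 2 := by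
    rw [← pow_add, Nat.sub_add_cancel hn]
  rw [norm_inv, norm_pow, hsplit, mul_inv, ← norm_ofReal_sub_sq]
  gcongr

lemma tendsto_inv_ofReal_sub_pow_cobounded (c : ℂ) {m : ℕ} (hm : m ≠ 0) :
    Tendsto (fun x : ℝ => (((x : ℂ) - c) ^ m)⁻¹) (cobounded ℝ) (𝓝 0) := by
  have hsub : Tendsto (fun x : ℝ => (x : ℂ) - c) (cobounded ℝ) (cobounded ℂ) :=
    tendsto_norm_atTop_iff_cobounded.mp <| by
      simpa [Function.comp_def, dist_eq_norm] using
        (Metric.tendsto_dist_right_cobounded_atTop c).comp (tendsto_algebraMap_cobounded ℝ ℂ)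
  exact tendsto_inv₀_cobounded.comp ((tendsto_pow_cobounded_cobounded hm).comp hsub)

lemma integral_inv_ofReal_sub_pow {c : ℂ} (hc : c.im ≠ 0) {n : ℕ} (hn : 2 ≤ n) :
    ∫ x : ℝ, (((x : ℂ) - c) ^ n)⁻¹ = 0 := by
  obtain ⟨m, rfl⟩ := Nat.exists_eq_add_of_le' hn
  set F : ℝ → ℂ := fun x => -((m + 1 : ℂ)⁻¹ * (((x : ℂ) - c) ^ (m + 1))⁻¹)
  have hF : ∀ x : ℝ, HasDerivAt F ((((x : ℂ) - c) ^ (m + 2))⁻¹) x := by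
    intro x
    have hne := ofReal_sub_ne_zero hc x
    have hG : HasDerivAt (fun z : ℂ => -((m + 1 : ℂ)⁻¹ * ((z - c) ^ (m + 1))⁻¹))
        ((((x : ℂ) - c) ^ (m + 2))⁻¹) x := by
      refine ((((hasDerivAt_id' (x : ℂ)).sub_const c).fun_pow (m + 1)).inv
        (pow_ne_zero _ hne)).const_mul (m + 1 : ℂ)⁻¹ |>.fun_neg |>.congr_deriv ?_
      rw [Nat.add_sub_cancel]
      field_simp
      push_cast
      ring
    exact hG.comp_ofReal
  have hlim : Tendsto F (cobounded ℝ) (𝓝 0) := by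
    simpa [F] using ((tendsto_inv_ofReal_sub_pow_cobounded c m.succ_ne_zero).const_mul
      (m + 1 : ℂ)⁻¹).neg
  rw [integral_of_hasDerivAt_of_tendsto hF (integrable_inv_ofReal_sub_pow hc hn)
    (hlim.mono_left IsOrderBornology.atBot_le_cobounded)
    (hlim.mono_left IsOrderBornology.atTop_le_cobounded), sub_zero]

lemma integrable_sum_inv_ofReal_sub_pow {ι : Type*} (s : Finset ι) (a c : ι → ℂ) (n : ι → ℕ)
    (hc : ∀ i ∈ s, (c i).im ≠ 0) (hn : ∀ i ∈ s, 2 ≤ n i) :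
    Integrable fun x : ℝ => ∑ i ∈ s, a i * (((x : ℂ) - c i) ^ n i)⁻¹ :=
  integrable_finsetSum s fun i hi =>
    (integrable_inv_ofReal_sub_pow (hc i hi) (hn i hi)).const_mul (a i)

lemma integral_sum_inv_ofReal_sub_pow {ι : Type*} (s : Finset ι) (a c : ι → ℂ) (n : ι → ℕ)
    (hc : ∀ i ∈ s, (c i).im ≠ 0) (hn : ∀ i ∈ s, 2 ≤ n i) :
    ∫ x : ℝ, ∑ i ∈ s, a i * (((x : ℂ) - c i) ^ n i)⁻¹ = 0 := by
  rw [integral_finsetSum s fun i hi =>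
    (integrable_inv_ofReal_sub_pow (hc i hi) (hn i hi)).const_mul (a i)]
  refine Finset.sum_eq_zero fun i hi => ?_
  rw [integral_const_mul, integral_inv_ofReal_sub_pow (hc i hi) (hn i hi), mul_zero]

end Complex

lemma integrand_partial_fractions (x : ℝ) :
    (-7 * I + 26 * (x : ℂ) + 15 * I * (x : ℂ) ^ 2) / (((x : ℂ) - I) ^ 5 * ((x : ℂ) + I) ^ 3)
      = ∑ i : Fin 6, ![-1 / 2, -5 * I / 4, -3 / 8, -23 * I / 16, 3 / 2, -2 * I] i
          * (((x : ℂ) - ![I, I, I, I, -I, -I] i) ^ ![5, 4, 3, 2, 3, 2] i)⁻¹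
        + 55 * I / 16 * ((1 + x ^ 2)⁻¹ : ℝ) := by
  have h₁ : (x : ℂ) - I ≠ 0 := ofReal_sub_ne_zero (by simp) x
  have h₂ : (x : ℂ) + I ≠ 0 := by simpa using ofReal_sub_ne_zero (c := -I) (by simp) x
  have h₃ : 1 + (x : ℂ) ^ 2 = ((x : ℂ) - I) * ((x : ℂ) + I) := by
    linear_combination I_sq
  simp [Fin.sum_univ_succ, h₃]
  field_simp
  grind [I_sq]

theorem stmt_16 :
    ∫ x : ℝ, (-7 * I + 26 * (x : ℂ) + 15 * I * (x : ℂ) ^ 2) / (((x : ℂ) - I) ^ 5 * ((x : ℂ) + I) ^ 3) = 55 * Real.pi * I / 16 := by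
  have hc : ∀ i ∈ Finset.univ, (![I, I, I, I, -I, -I] i).im ≠ 0 := by
    simp [Fin.forall_fin_succ]
  have hn : ∀ i ∈ Finset.univ, 2 ≤ ![5, 4, 3, 2, 3, 2] i := by
    simp [Fin.forall_fin_succ]
  have hcauchy_int : Integrable fun x : ℝ => (((1 + x ^ 2)⁻¹ : ℝ) : ℂ) :=
    integrable_inv_one_add_sq.ofReal
  have hcauchy : ∫ x : ℝ, (((1 + x ^ 2)⁻¹ : ℝ) : ℂ) = π := by
    rw [integral_complex_ofReal, integral_univ_inv_one_add_sq]
  rw [integral_congr_ae (ae_of_all _ integrand_partial_fractions),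
    integral_add (integrable_sum_inv_ofReal_sub_pow _ _ _ _ hc hn)
      (hcauchy_int.const_mul _),
    integral_sum_inv_ofReal_sub_pow _ _ _ _ hc hn, integral_const_mul, hcauchy]
  ring
end
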